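/- Let n ≥ 3 and Ω^> = {x ∈ ℝ^{n+1} : x_1 > 0 and x_{n+1} > x_1 x_2 + x_1 Σ_{j=3}^n x_j²}. For every point x ∈ Ω^> there exist q > 0, r ≠ 0, t ∈ ℝ and s = (s_3,…,s_n) ∈ ℝ^{n−2} such that the affine map T_{q,r,t,s}(y) = (q y_1, r²(y_2 − 2Σ_{j=3}^n s_j y_j + t), r(y_3 + s_3), …, r(y_n + s_n), q r²(y_{n+1} + y_1 Σ_{j=3}^n s_j² + t y_1)) sends the point (1, 0, …, 0, 1) to x. Consequently the group of affine maps T_{q,r,t,s} acts transitively on Ω^>. -/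
import Mathlib

def omegaGT (n : ℕ) (hn : 3 ≤ n) : Set (Fin (n + 1) → ℝ) :=
  {x | 0 < x 0 ∧ x 0 * x ⟨1, by omega⟩ +
    x 0 * ∑ j : Fin (n + 1), (if 2 ≤ (j : ℕ) ∧ (j : ℕ) < n then x j ^ 2 else 0)
      < x (Fin.last n)}

def Tmap (n : ℕ) (q r t : ℝ) (s : Fin (n - 2) → ℝ) (x : Fin (n + 1) → ℝ) :
    Fin (n + 1) → ℝ := fun i =>
  if h0 : (i : ℕ) = 0 then q * x i
  else if h1 : (i : ℕ) = 1 then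
    r ^ 2 * (x i - 2 * (∑ j : Fin (n - 2), s j * x ⟨(j : ℕ) + 2, by have := j.isLt; omega⟩) + t)
  else if h2 : (i : ℕ) = n then
    q * r ^ 2 * (x i + x 0 * (∑ j : Fin (n - 2), s j ^ 2) + t * x 0)
  else r * (x i + s ⟨(i : ℕ) - 2, by have := i.isLt; omega⟩)

lemma key_sum (n : ℕ) (hn : 3 ≤ n) (f : ℕ → ℝ) :
    ∑ j : Fin (n + 1), (if 2 ≤ (j : ℕ) ∧ (j : ℕ) < n then f (j : ℕ) else 0)
      = ∑ j : Fin (n - 2), f ((j : ℕ) + 2) := by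
  rw [Fin.sum_univ_eq_sum_range (fun m => if 2 ≤ m ∧ m < n then f m else 0),
      Fin.sum_univ_eq_sum_range (fun m => f (m + 2))]
  rw [← Finset.sum_filter]
  have h : (Finset.range (n + 1)).filter (fun j => 2 ≤ j ∧ j < n) = Finset.Ico 2 n := by
    ext m; simp [Finset.mem_Ico]; omega
  rw [h, Finset.sum_Ico_eq_sum_range]
  apply Finset.sum_congr rfl
  intro m _; rw [Nat.add_comm]

/-- The group of affine maps `T_{q,r,t,s}` acts transitively on `Ω^>`: every point of `Ω^>`
is the image of the base point `(1, 0, …, 0, 1)` under some `T_{q,r,t,s}`. -/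
theorem Tmap_transitive_omegaGT (n : ℕ) (hn : 3 ≤ n) :
    ∀ x ∈ omegaGT n hn, ∃ (q r t : ℝ) (s : Fin (n - 2) → ℝ), 0 < q ∧ r ≠ 0 ∧
      Tmap n q r t s
        (fun i => if (i : ℕ) = 0 then 1 else if (i : ℕ) = n then 1 else 0) = x := by
  intro x hx
  obtain ⟨hx0, hxn⟩ := hx
  set S : ℝ := ∑ j : Fin (n - 2), x ⟨(j : ℕ) + 2, by have := j.isLt; omega⟩ ^ 2 with hS_def
  have hS : ∑ j : Fin (n + 1), (if 2 ≤ (j : ℕ) ∧ (j : ℕ) < n then x j ^ 2 else 0) = S := by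
    have hk := key_sum n hn (fun m => if h : m < n + 1 then x ⟨m, h⟩ ^ 2 else 0)
    calc ∑ j : Fin (n + 1), (if 2 ≤ (j : ℕ) ∧ (j : ℕ) < n then x j ^ 2 else 0)
        = ∑ j : Fin (n + 1), (if 2 ≤ (j : ℕ) ∧ (j : ℕ) < n then
            (if h : (j : ℕ) < n + 1 then x ⟨(j : ℕ), h⟩ ^ 2 else 0) else 0) := by
          apply Finset.sum_congr rfl; intro j _; rw [dif_pos j.isLt]
      _ = ∑ j : Fin (n - 2), (if h : (j : ℕ) + 2 < n + 1 then x ⟨(j : ℕ) + 2, h⟩ ^ 2 else 0) := hk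
      _ = S := by
          apply Finset.sum_congr rfl; intro j _
          rw [dif_pos (by have := j.isLt; omega : (j : ℕ) + 2 < n + 1)]
  set x1 : ℝ := x ⟨1, by omega⟩ with hx1_def
  set D : ℝ := x (Fin.last n) - x 0 * x1 - x 0 * S with hD_def
  have hD : 0 < D := by rw [hD_def]; rw [hS] at hxn; linarith
  have hxlast : x (Fin.last n) = D + x 0 * x1 + x 0 * S := by rw [hD_def]; ring
  set r : ℝ := Real.sqrt (D / x 0) with hr_def
  have hrpos : 0 < r := Real.sqrt_pos.mpr (div_pos hD hx0)
  have hrne : r ≠ 0 := ne_of_gt hrpos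
  have hr2 : r ^ 2 = D / x 0 := Real.sq_sqrt (le_of_lt (div_pos hD hx0))
  have hx0' : (x 0 : ℝ) ≠ 0 := ne_of_gt hx0
  have hDne : D ≠ 0 := ne_of_gt hD
  set sfun : Fin (n - 2) → ℝ :=
    fun j => x ⟨(j : ℕ) + 2, by have := j.isLt; omega⟩ / r with hs_def
  have hzero : ((0 : Fin (n + 1)) : ℕ) = 0 := rfl
  refine ⟨x 0, r, x 0 * x1 / D, sfun, hx0, hrne, ?_⟩
  funext i
  simp only [Tmap, Fin.val_mk]
  by_cases h0 : (i : ℕ) = 0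
  · rw [dif_pos h0, if_pos h0]
    have hi : i = 0 := Fin.ext (by simpa using h0)
    rw [hi, mul_one]
  · rw [dif_neg h0]
    by_cases h1 : (i : ℕ) = 1
    · rw [dif_pos h1]
      have hi : i = ⟨1, by omega⟩ := Fin.ext (by simpa using h1)
      have hxi : x i = x1 := by rw [hx1_def, hi]
      have hsum0 : (∑ j : Fin (n - 2), sfun j *
          (if (j : ℕ) + 2 = 0 then (1:ℝ) else if (j : ℕ) + 2 = n then 1 else 0)) = 0 := by
        apply Finset.sum_eq_zero; intro j _
        rw [if_neg (by omega), if_neg (by have := j.isLt; omega), mul_zero]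
      rw [if_neg h0, if_neg (show ¬(i : ℕ) = n by omega), hsum0, hxi, hr2, hx1_def]
      field_simp <;> ring
    · rw [dif_neg h1]
      by_cases h2 : (i : ℕ) = n
      · rw [dif_pos h2]
        have hi : i = Fin.last n := Fin.ext (by simpa using h2)
        have hxi : x i = x (Fin.last n) := by rw [hi]
        have hSg : (∑ j : Fin (n - 2), sfun j ^ 2) = S / r ^ 2 := by
          rw [hs_def, hS_def, Finset.sum_div]
          apply Finset.sum_congr rfl; intro j _; rw [div_pow]
        rw [if_neg h0, if_pos h2, if_pos hzero, hSg, hxi, hxlast, hr2]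
        field_simp <;> ring
      · rw [dif_neg h2]
        have h2le : 2 ≤ (i : ℕ) := by omega
        have hxidx : x (⟨(i : ℕ) - 2 + 2, by have := i.isLt; omega⟩ : Fin (n + 1)) = x i := by
          congr 1; exact Fin.ext (by simp; omega)
        rw [if_neg h0, if_neg h2, hs_def]
        simp only [Fin.val_mk]
        rw [hxidx, zero_add]
        field_simp
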